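/- arXiv:2010.13176 — 3 statements merged into one kernel-verified Lean document; each statement's English description precedes it below -/
import Mathlib

section
/- Let G be a group, c a left-invariant circular ordering of G, and h ∈ G̃_c. Then the sequence n ↦ [hⁿ]_c / n converges to a real limit r̃ot_c(h). Moreover, if g̃ and g̃′ are two lifts in G̃_c of the same element g ∈ G, then r̃ot_c(g̃) − r̃ot_c(g̃′) is an integer, and for any g, h ∈ G the quantity r̃ot_c(g̃h̃) − r̃ot_c(g̃) − r̃ot_c(h̃) is independent of the chosen lifts g̃ of g and h̃ of h. -/
namespace Paper

variable {G : Type*} [Group G]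

/-- A left-invariant circular ordering of a group `G`, as a function `G³ → {0, ±1} ⊆ ℤ`. -/
def IsCircOrd (c : G → G → G → ℤ) : Prop :=
  (∀ g₁ g₂ g₃ : G, c g₁ g₂ g₃ = 0 ↔ (g₁ = g₂ ∨ g₁ = g₃ ∨ g₂ = g₃)) ∧
  (∀ g₁ g₂ g₃ : G, c g₁ g₂ g₃ = 0 ∨ c g₁ g₂ g₃ = 1 ∨ c g₁ g₂ g₃ = -1) ∧
  (∀ g₁ g₂ g₃ g₄ : G, c g₂ g₃ g₄ - c g₁ g₃ g₄ + c g₁ g₂ g₄ - c g₁ g₂ g₃ = 0) ∧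
  (∀ g g₁ g₂ g₃ : G, c (g*g₁) (g*g₂) (g*g₃) = c g₁ g₂ g₃)

/-- The space CO(G) of circular orderings, topologized as a subspace of `ℤ^{G³}`
(all relevant values lie in the discrete set `{0,±1}`, and `ℤ` carries the discrete
topology, so this is the subspace topology from the product topology on `{0,±1}^{G³}`). -/
abbrev CircOrd (G : Type*) [Group G] := {c : G → G → G → ℤ // IsCircOrd c}

open Classical in
/-- The cocycle `f_c`: `f_c(g,h) = 0` if `g = 1` or `h = 1` or `c(1,g,gh) = 1`,
and `f_c(g,h) = 1` otherwise (i.e. when `gh = 1 ≠ g`, or `c(1,gh,g) = 1`). -/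
noncomputable def fc (c : G → G → G → ℤ) (g h : G) : ℤ :=
  if g = 1 ∨ h = 1 ∨ c 1 g (g*h) = 1 then 0 else 1

/-- Multiplication in the central extension `G̃_c = G × ℤ`:
`(g,n)(h,m) = (gh, n+m+f_c(g,h))`. -/
noncomputable def liftMul (c : G → G → G → ℤ) (x y : G × ℤ) : G × ℤ :=
  (x.1 * y.1, x.2 + y.2 + fc c x.1 y.1)

/-- Powers (with natural number exponents) in `G̃_c`. -/
noncomputable def liftPow (c : G → G → G → ℤ) (x : G × ℤ) : ℕ → G × ℤ
  | 0 => (1, 0)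
  | n+1 => liftMul c (liftPow c x n) x

/-- `[h]_c`: the unique integer `k` with `z_c^k ≤_c h <_c z_c^{k+1}`, where `<_c` is the
left-ordering of `G̃_c` with positive cone `{(g,n) : n ≥ 0} ∖ {(1,0)}` and `z_c = (1,1)`.
Since `z_c^k = (1,k)` and `f_c(g,g⁻¹) = 1` for `g ≠ 1`, this is exactly the second
coordinate of `h`. -/
def liftFloor (h : G × ℤ) : ℤ := h.2

/-- The translation number `r̃ot_c(h)` of `h ∈ G̃_c`: the limit of `[hⁿ]_c / n`
(`limUnder` picks out the limit when it exists). -/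
noncomputable def rotTilde (c : G → G → G → ℤ) (h : G × ℤ) : ℝ :=
  Filter.limUnder Filter.atTop (fun n : ℕ => (liftFloor (liftPow c h n) : ℝ) / (n : ℝ))

/-- The rotation number `rot_c(g) ∈ ℝ/ℤ`, computed using the lift `(g,0) ∈ G̃_c`
(it is independent of the choice of lift). -/
noncomputable def rotc (c : G → G → G → ℤ) (g : G) : AddCircle (1:ℝ) :=
  ((rotTilde c (g, 0) : ℝ) : AddCircle (1:ℝ))

/-- `τ_c(g,h) = r̃ot_c(g̃h̃) − r̃ot_c(g̃) − r̃ot_c(h̃)`, computed using the lifts `(g,0)`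
and `(h,0)` (it is independent of the choice of lifts). -/
noncomputable def tauc (c : G → G → G → ℤ) (g h : G) : ℝ :=
  rotTilde c (liftMul c (g,0) (h,0)) - rotTilde c (g,0) - rotTilde c (h,0)

/-- A positive cone of a group `G`: `P · P ⊆ P` and `P ∪ P⁻¹ = G ∖ {1}`.
It determines a left-ordering by `g < h` iff `g⁻¹h ∈ P`. -/
def IsPositiveCone (P : Set G) : Prop :=
  (∀ a ∈ P, ∀ b ∈ P, a * b ∈ P) ∧ (P ∪ P⁻¹ = {g : G | g ≠ 1})

/-- The left-ordering determined by a positive cone. -/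
def coneLt (P : Set G) (a b : G) : Prop := a⁻¹ * b ∈ P

open Classical in
/-- The secret left-ordering `c_<` determined by a positive cone `P`:
`c_<(a,b,c) = sign σ` where `σ` is the permutation sorting `(a,b,c)` into increasing
order, i.e. `c_< = 1` on positively cyclically ordered triples, `-1` on negatively
cyclically ordered triples, and `0` when the entries are not all distinct. -/
noncomputable def circOfCone (P : Set G) : G → G → G → ℤ := fun a b c =>
  if (coneLt P a b ∧ coneLt P b c) ∨ (coneLt P b c ∧ coneLt P c a) ∨
      (coneLt P c a ∧ coneLt P a b) then 1
  else if (coneLt P c b ∧ coneLt P b a) ∨ (coneLt P b a ∧ coneLt P a c) ∨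
      (coneLt P a c ∧ coneLt P c b) then -1
  else 0

/-- A circular ordering is a *secret left-ordering* if it is `c_<` for some
left-ordering `<` of `G`. -/
def IsSecret (c : G → G → G → ℤ) : Prop := ∃ P : Set G, IsPositiveCone P ∧ c = circOfCone P

/-!
The function `w(g, h) = c(1, g, gh)` is a 2-cocycle: this is the cocycle condition of `c` at
`1, g, gh, ghk` combined with left invariance. Since `2 f_c = 1 - w + δφ`, where `φ` is the
indicator of `1`, the function `f_c` is a 2-cocycle too, and `G̃_c` is associative. As
`0 ≤ f_c ≤ 1`, the sequence `[hⁿ]_c + 1` is subadditive and `[hⁿ]_c / n` is bounded below, so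
Fekete's lemma gives the limit. Replacing the lift `(g, 0)` by `(g, m)` adds `n m` to
`[hⁿ]_c`, hence adds `m` to `r̃ot_c`.
-/

open Filter Topology

lemma exists_tendsto_div_of_le_add_add {u : ℕ → ℝ} {a C : ℝ} (hC : 0 ≤ C)
    (hu : ∀ m n, u (m + n) ≤ u m + u n + C) (ha : ∀ n : ℕ, a * n ≤ u n) :
    ∃ L, Tendsto (fun n : ℕ => u n / n) atTop (𝓝 L) := by
  have hsub : Subadditive (fun n => u n + C) := fun m n => by linarith [hu m n]
  have hbdd : BddBelow (Set.range fun n : ℕ => (u n + C) / n) := by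
    refine ⟨min a 0, ?_⟩
    rintro _ ⟨n, rfl⟩
    rcases n.eq_zero_or_pos with rfl | hn
    · simp
    · have hn' : (0 : ℝ) < n := by exact_mod_cast hn
      exact (min_le_left _ _).trans ((le_div_iff₀ hn').2 (by linarith [ha n]))
  have hlim := (hsub.tendsto_lim hbdd).sub (tendsto_const_div_atTop_nhds_zero_nat C)
  rw [sub_zero] at hlim
  exact ⟨hsub.lim, hlim.congr fun n => by rw [div_sub_div_same, add_sub_cancel_right]⟩

variable {c : G → G → G → ℤ}

lemma IsCircOrd.cocycle (hc : IsCircOrd c) (g h k : G) :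
    c 1 h (h * k) + c 1 g (g * h * k) = c 1 g (g * h) + c 1 (g * h) (g * h * k) := by
  have hcond := hc.2.2.1 1 g (g * h) (g * h * k)
  have hinv := hc.2.2.2 g 1 h (h * k)
  simp only [mul_one, ← mul_assoc] at hinv
  omega

open Classical in
lemma two_mul_fc (hc : IsCircOrd c) (g h : G) :
    2 * fc c g h = 1 - c 1 g (g * h) + (if g * h = 1 then 1 else 0)
      - (if g = 1 then 1 else 0) - (if h = 1 then 1 else 0) := by
  have hzero : ∀ a b d : G, a = b ∨ a = d ∨ b = d → c a b d = 0 := fun a b d => (hc.1 a b d).2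
  by_cases hg : g = 1
  · subst hg
    simp only [fc, true_or, if_true, one_mul, hzero 1 1 h (Or.inl rfl)]
    split_ifs <;> omega
  by_cases hh : h = 1
  · subst hh
    simp only [fc, or_true, true_or, if_true, mul_one, hzero 1 g g (Or.inr (Or.inr rfl)), hg]
    split_ifs <;> omega
  by_cases hgh : g * h = 1
  · simp only [fc, hg, hh, hgh, hzero 1 g 1 (Or.inr (Or.inl rfl))]
    norm_num
  have hg' : g ≠ g * h := fun e => hh (by simpa using e.symm)
  have hw := hc.2.1 1 g (g * h)
  have hw0 : c 1 g (g * h) ≠ 0 := fun e => by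
    rcases (hc.1 _ _ _).1 e with e | e | e
    exacts [hg e.symm, hgh e.symm, hg' e]
  simp only [fc, hg, hh, hgh, false_or, if_false]
  split_ifs <;> omega

lemma fc_cocycle (hc : IsCircOrd c) (g h k : G) :
    fc c h k + fc c g (h * k) = fc c g h + fc c (g * h) k := by
  have := hc.cocycle g h k
  have := two_mul_fc hc h k
  have := two_mul_fc hc g (h * k)
  have := two_mul_fc hc g h
  have := two_mul_fc hc (g * h) k
  simp only [← mul_assoc] at *
  omega

lemma fc_nonneg (g h : G) : 0 ≤ fc c g h := by unfold fc; split <;> omega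

lemma fc_le_one (g h : G) : fc c g h ≤ 1 := by unfold fc; split <;> omega

lemma liftMul_assoc (hc : IsCircOrd c) (x y z : G × ℤ) :
    liftMul c (liftMul c x y) z = liftMul c x (liftMul c y z) := by
  have := fc_cocycle hc x.1 y.1 z.1
  simp only [liftMul, Prod.mk.injEq]
  exact ⟨mul_assoc _ _ _, by omega⟩

lemma liftMul_one_zero (x : G × ℤ) : liftMul c x (1, 0) = x := by
  simp [liftMul, fc]

lemma liftPow_fst (x : G × ℤ) (n : ℕ) : (liftPow c x n).1 = x.1 ^ n := by
  induction n with
  | zero => simp [liftPow]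
  | succ n ih => simp [liftPow, liftMul, ih, pow_succ]

lemma liftPow_add (hc : IsCircOrd c) (x : G × ℤ) (m n : ℕ) :
    liftPow c x (m + n) = liftMul c (liftPow c x m) (liftPow c x n) := by
  induction n with
  | zero => exact (liftMul_one_zero (c := c) _).symm
  | succ n ih => rw [← add_assoc, liftPow, ih, liftMul_assoc hc, ← liftPow]

lemma liftFloor_liftPow_add_le (hc : IsCircOrd c) (x : G × ℤ) (m n : ℕ) :
    liftFloor (liftPow c x (m + n)) ≤
      liftFloor (liftPow c x m) + liftFloor (liftPow c x n) + 1 := by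
  rw [liftPow_add hc]
  exact add_le_add_right (fc_le_one (c := c) _ _) _

lemma mul_le_liftFloor_liftPow (x : G × ℤ) (n : ℕ) : n * x.2 ≤ liftFloor (liftPow c x n) := by
  induction n with
  | zero => simp [liftPow, liftFloor]
  | succ n ih =>
    have := fc_nonneg (c := c) (liftPow c x n).1 x.1
    simp only [liftPow, liftMul, liftFloor] at ih ⊢
    push_cast
    linarith

lemma tendsto_rotTilde (hc : IsCircOrd c) (x : G × ℤ) :
    Tendsto (fun n : ℕ => (liftFloor (liftPow c x n) : ℝ) / n) atTop (𝓝 (rotTilde c x)) := by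
  obtain ⟨L, hL⟩ := exists_tendsto_div_of_le_add_add
    (u := fun n => (liftFloor (liftPow c x n) : ℝ)) (a := x.2) zero_le_one
    (fun m n => by exact_mod_cast liftFloor_liftPow_add_le hc x m n)
    (fun n => by rw [mul_comm]; exact_mod_cast mul_le_liftFloor_liftPow x n)
  rwa [rotTilde, hL.limUnder_eq]

lemma liftFloor_liftPow_mk (g : G) (m : ℤ) (n : ℕ) :
    liftFloor (liftPow c (g, m) n) = liftFloor (liftPow c (g, 0) n) + n * m := by
  induction n with
  | zero => simp [liftPow, liftFloor]
  | succ n ih =>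
    simp only [liftPow, liftMul, liftFloor, liftPow_fst] at ih ⊢
    rw [ih]
    push_cast
    ring

lemma rotTilde_mk (hc : IsCircOrd c) (g : G) (m : ℤ) :
    rotTilde c (g, m) = rotTilde c (g, 0) + m := by
  refine tendsto_nhds_unique (tendsto_rotTilde hc (g, m)) ?_
  refine ((tendsto_rotTilde hc (g, 0)).add tendsto_const_nhds).congr' ?_
  filter_upwards [eventually_ne_atTop 0] with n hn
  rw [liftFloor_liftPow_mk g m n]
  push_cast
  field_simp

lemma rotTilde_liftMul_sub_sub (hc : IsCircOrd c) (g h : G) (m k : ℤ) :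
    rotTilde c (liftMul c (g, m) (h, k)) - rotTilde c (g, m) - rotTilde c (h, k) = tauc c g h := by
  simp only [tauc, liftMul]
  rw [rotTilde_mk hc (g * h), rotTilde_mk hc (g * h) (0 + 0 + _), rotTilde_mk hc g m,
    rotTilde_mk hc h k]
  push_cast
  ring

/-- Definition 4.5 / Proposition (existence of translation numbers and independence of
lifts): for every `h ∈ G̃_c` the sequence `[hⁿ]_c/n` converges (to `r̃ot_c(h)`); the
translation numbers of two lifts of the same `g ∈ G` differ by an integer; and
`r̃ot_c(g̃h̃) − r̃ot_c(g̃) − r̃ot_c(h̃)` does not depend on the choice of lifts. -/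
theorem stmt3 (c : G → G → G → ℤ) (hc : IsCircOrd c) :
    (∀ h : G × ℤ,
      Filter.Tendsto (fun n : ℕ => (liftFloor (liftPow c h n) : ℝ) / (n : ℝ))
        Filter.atTop (nhds (rotTilde c h))) ∧
    (∀ g : G, ∀ m m' : ℤ, ∃ k : ℤ, rotTilde c (g, m) - rotTilde c (g, m') = (k : ℝ)) ∧
    (∀ g h : G, ∀ m m' k k' : ℤ,
      rotTilde c (liftMul c (g, m) (h, k)) - rotTilde c (g, m) - rotTilde c (h, k) =
      rotTilde c (liftMul c (g, m') (h, k')) - rotTilde c (g, m') - rotTilde c (h, k')) := by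
  refine ⟨tendsto_rotTilde hc, fun g m m' => ⟨m - m', ?_⟩, fun g h m m' k k' => ?_⟩
  · rw [rotTilde_mk hc g m, rotTilde_mk hc g m']
    push_cast
    ring
  · rw [rotTilde_liftMul_sub_sub hc, rotTilde_liftMul_sub_sub hc]

end Paper
end

section
/- Let 1 → K → G → H → 1 be a short exact sequence of groups, with q : G → H the surjection with kernel K, and let < be a left-ordering of K. For each left-invariant circular ordering c of H define φ_<(c) : G³ → {0,±1} by: φ_<(c)(g₁,g₂,g₃) = c(q(g₁),q(g₂),q(g₃)) if q(g₁), q(g₂), q(g₃) are pairwise distinct; φ_<(c)(g₁,g₂,g₃) = c_<(g₂⁻¹g₁, id, g₁⁻¹g₂) if q(g₁) = q(g₂) ≠ q(g₃); φ_<(c)(g₁,g₂,g₃) = c_<(id, g₁⁻¹g₂, g₁⁻¹g₃) if q(g₁) = q(g₂) = q(g₃); and the remaining cases where exactly two of q(g₁), q(g₂), q(g₃) coincide are determined by cyclic invariance, φ_<(c)(g₁,g₂,g₃) = φ_<(c)(g₂,g₃,g₁). Then φ_<(c) is a left-invariant circular ordering of G for every c ∈ CO(H), and the resulting map φ_< :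 CO(H) → CO(G) is continuous. -/
namespace Paper

variable {G : Type*} [Group G]

/-- `P` is the positive cone of a left-ordering of the subgroup `K` of `G`:
`P · P ⊆ P` and `P ∪ P⁻¹ = K ∖ {1}`. -/
def IsPositiveConeOn (K : Subgroup G) (P : Set G) : Prop :=
  (∀ a ∈ P, ∀ b ∈ P, a * b ∈ P) ∧ (P ∪ P⁻¹ = {g : G | g ∈ K ∧ g ≠ 1})

open Classical in
/-- The lexicographic extension `φ_<(c)` of a circular ordering `c` of `H` along a
surjection `q : G → H` with left-ordered kernel (ordering given by the cone `P`); the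
cases where exactly two of the images coincide are determined by cyclic invariance. -/
noncomputable def lexExt {H : Type*} [Group H] (q : G →* H) (P : Set G)
    (c : H → H → H → ℤ) : G → G → G → ℤ := fun g₁ g₂ g₃ =>
  if q g₁ ≠ q g₂ ∧ q g₁ ≠ q g₃ ∧ q g₂ ≠ q g₃ then c (q g₁) (q g₂) (q g₃)
  else if q g₁ = q g₂ ∧ q g₂ = q g₃ then circOfCone P 1 (g₁⁻¹ * g₂) (g₁⁻¹ * g₃)
  else if q g₁ = q g₂ then circOfCone P (g₂⁻¹ * g₁) 1 (g₁⁻¹ * g₂)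
  else if q g₂ = q g₃ then circOfCone P (g₃⁻¹ * g₂) 1 (g₂⁻¹ * g₃)
  else circOfCone P (g₁⁻¹ * g₃) 1 (g₃⁻¹ * g₁)


/-!
Write `s = coneCmp P` for the comparison `s x y = 1` if `x < y`, `-1` if `y < x`, `0` otherwise;
it vanishes off the cosets of the kernel, and on a single coset `c_<` is its coboundary
`s x y + s y z + s z x`. Hence `φ_<(c) = c ∘ q + δs`: the cocycle identity and left invariance
are inherited from `c` and from the antisymmetric, left-invariant `s`, and only the first
summand depends on `c`, which gives continuity. That `φ_<(c)` vanishes exactly on degenerate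
triples is checked according to which of the images under `q` coincide.
-/

namespace IsPositiveConeOn

variable {K : Subgroup G} {P : Set G}

theorem one_notMem (hP : IsPositiveConeOn K P) : (1 : G) ∉ P := fun h =>
  (hP.2.subset (Or.inl h) : (1 : G) ∈ K ∧ (1 : G) ≠ 1).2 rfl

theorem trichotomy (hP : IsPositiveConeOn K P) {x : G} (hx : x ∈ K) :
    x ∈ P ∨ x = 1 ∨ x⁻¹ ∈ P := by
  by_cases h1 : x = 1
  · exact Or.inr (Or.inl h1)
  · rcases (hP.2.symm.subset ⟨hx, h1⟩ : x ∈ P ∪ P⁻¹) with h | h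
    exacts [Or.inl h, Or.inr (Or.inr h)]

theorem coneLt_trans (hP : IsPositiveConeOn K P) {x y z : G} (hxy : coneLt P x y)
    (hyz : coneLt P y z) : coneLt P x z := by
  simpa [coneLt, mul_assoc] using hP.1 _ hxy _ hyz

theorem coneLt_irrefl (hP : IsPositiveConeOn K P) (x : G) : ¬ coneLt P x x := by
  simpa [coneLt] using hP.one_notMem

theorem coneLt_asymm (hP : IsPositiveConeOn K P) {x y : G} (hxy : coneLt P x y) :
    ¬ coneLt P y x := fun hyx => hP.coneLt_irrefl x (hP.coneLt_trans hxy hyx)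

theorem ne_of_coneLt (hP : IsPositiveConeOn K P) {x y : G} (hxy : coneLt P x y) : x ≠ y := by
  rintro rfl
  exact hP.coneLt_irrefl x hxy

theorem inv_mul_mem_of_coneLt (hP : IsPositiveConeOn K P) {x y : G} (hxy : coneLt P x y) :
    x⁻¹ * y ∈ K :=
  (hP.2.subset (Or.inl hxy) : x⁻¹ * y ∈ K ∧ x⁻¹ * y ≠ 1).1

theorem coneLt_trichotomous (hP : IsPositiveConeOn K P) {x y : G} (h : x⁻¹ * y ∈ K) :
    coneLt P x y ∨ x = y ∨ coneLt P y x := by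
  rcases hP.trichotomy h with h | h | h
  · exact Or.inl h
  · exact Or.inr (Or.inl (inv_mul_eq_one.mp h))
  · exact Or.inr (Or.inr (by simpa [coneLt] using h))

end IsPositiveConeOn

variable {K : Subgroup G} {P : Set G}

theorem coneLt_mul_left_iff (g x y : G) : coneLt P (g * x) (g * y) ↔ coneLt P x y := by
  simp [coneLt, mul_assoc]

theorem circOfCone_mul_left (P : Set G) (g a b c : G) :
    circOfCone P (g * a) (g * b) (g * c) = circOfCone P a b c := by
  classical
  simp only [circOfCone, coneLt_mul_left_iff]

theorem circOfCone_mem (P : Set G) (a b c : G) :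
    circOfCone P a b c = 0 ∨ circOfCone P a b c = 1 ∨ circOfCone P a b c = -1 := by
  unfold circOfCone
  split_ifs <;> simp

open Classical in
noncomputable def coneCmp (P : Set G) (x y : G) : ℤ :=
  if coneLt P x y then 1 else if coneLt P y x then -1 else 0

theorem coneCmp_mul_left (g x y : G) : coneCmp P (g * x) (g * y) = coneCmp P x y := by
  classical
  simp only [coneCmp, coneLt_mul_left_iff]

theorem coneCmp_eq_one {x y : G} (h : coneLt P x y) : coneCmp P x y = 1 := by
  simp [coneCmp, h]

theorem coneCmp_eq_neg_one (hP : IsPositiveConeOn K P) {x y : G} (h : coneLt P y x) :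
    coneCmp P x y = -1 := by
  simp [coneCmp, h, hP.coneLt_asymm h]

theorem coneCmp_eq_zero_of_inv_mul_notMem (hP : IsPositiveConeOn K P) {x y : G}
    (h : x⁻¹ * y ∉ K) : coneCmp P x y = 0 := by
  have hxy : ¬ coneLt P x y := fun h' => h (hP.inv_mul_mem_of_coneLt h')
  have hyx : ¬ coneLt P y x := fun h' => h (by simpa using inv_mem (hP.inv_mul_mem_of_coneLt h'))
  simp [coneCmp, hxy, hyx]

theorem coneCmp_eq_zero_iff (hP : IsPositiveConeOn K P) {x y : G} (h : x⁻¹ * y ∈ K) :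
    coneCmp P x y = 0 ↔ x = y := by
  rcases hP.coneLt_trichotomous h with h | rfl | h
  · simp [coneCmp, h, hP.ne_of_coneLt h]
  · simp [coneCmp, hP.coneLt_irrefl]
  · simp [coneCmp, h, hP.coneLt_asymm h, Ne.symm (hP.ne_of_coneLt h)]

theorem coneCmp_swap (hP : IsPositiveConeOn K P) (x y : G) : coneCmp P y x = -coneCmp P x y := by
  by_cases hxy : coneLt P x y
  · rw [coneCmp_eq_one hxy, coneCmp_eq_neg_one hP hxy]
  by_cases hyx : coneLt P y x
  · rw [coneCmp_eq_one hyx, coneCmp_eq_neg_one hP hyx, neg_neg]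
  simp [coneCmp, hxy, hyx]

theorem circOfCone_eq_coneCmp (hP : IsPositiveConeOn K P) {x y z : G} (hxy : x⁻¹ * y ∈ K)
    (hyz : y⁻¹ * z ∈ K) :
    circOfCone P x y z = coneCmp P x y + coneCmp P y z + coneCmp P z x := by
  have hzx : z⁻¹ * x ∈ K := by simpa [mul_assoc] using inv_mem (mul_mem hxy hyz)
  rcases hP.coneLt_trichotomous hxy with h₁ | rfl | h₁ <;>
  rcases hP.coneLt_trichotomous hyz with h₂ | rfl | h₂ <;>
  rcases hP.coneLt_trichotomous hzx with h₃ | h₃ | h₃ <;>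
  simp [circOfCone, coneCmp] <;> grind [hP.coneLt_trans, hP.coneLt_asymm, hP.coneLt_irrefl]

theorem coneCmp_cyclic_sum_eq_zero_iff_of_mem (hP : IsPositiveConeOn K P) {x y z : G}
    (hxy : x⁻¹ * y ∈ K) (hyz : y⁻¹ * z ∈ K) :
    coneCmp P x y + coneCmp P y z + coneCmp P z x = 0 ↔ x = y ∨ x = z ∨ y = z := by
  have hzx : z⁻¹ * x ∈ K := by simpa [mul_assoc] using inv_mem (mul_mem hxy hyz)
  rcases hP.coneLt_trichotomous hxy with h₁ | rfl | h₁ <;>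
  rcases hP.coneLt_trichotomous hyz with h₂ | rfl | h₂ <;>
  rcases hP.coneLt_trichotomous hzx with h₃ | h₃ | h₃ <;>
  simp [coneCmp] <;> grind [hP.coneLt_trans, hP.coneLt_asymm, hP.coneLt_irrefl]

theorem coneCmp_cyclic_sum_eq_zero_iff_of_mem_left (hP : IsPositiveConeOn K P) {x y z : G}
    (hxy : x⁻¹ * y ∈ K) :
    coneCmp P x y + coneCmp P y z + coneCmp P z x = 0 ↔ x = y ∨ x = z ∨ y = z := by
  by_cases hyz : y⁻¹ * z ∈ K
  · exact coneCmp_cyclic_sum_eq_zero_iff_of_mem hP hxy hyz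
  have hzx : z⁻¹ * x ∉ K := fun h => hyz (by simpa [mul_assoc] using inv_mem (mul_mem h hxy))
  have hxz : x ≠ z := by
    rintro rfl
    exact hyz (by simpa using inv_mem hxy)
  have hyz' : y ≠ z := by
    rintro rfl
    simp at hyz
  rw [coneCmp_eq_zero_of_inv_mul_notMem hP hyz, coneCmp_eq_zero_of_inv_mul_notMem hP hzx,
    add_zero, add_zero, coneCmp_eq_zero_iff hP hxy]
  tauto

theorem coneCmp_cyclic_sum_eq_zero_iff (hP : IsPositiveConeOn K P) {x y z : G}
    (h : x⁻¹ * y ∈ K ∨ y⁻¹ * z ∈ K ∨ z⁻¹ * x ∈ K) :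
    coneCmp P x y + coneCmp P y z + coneCmp P z x = 0 ↔ x = y ∨ x = z ∨ y = z := by
  rcases h with h | h | h
  · exact coneCmp_cyclic_sum_eq_zero_iff_of_mem_left hP h
  · rw [show coneCmp P x y + coneCmp P y z + coneCmp P z x =
      coneCmp P y z + coneCmp P z x + coneCmp P x y by ring,
      coneCmp_cyclic_sum_eq_zero_iff_of_mem_left hP h]
    tauto
  · rw [show coneCmp P x y + coneCmp P y z + coneCmp P z x =
      coneCmp P z x + coneCmp P x y + coneCmp P y z by ring,
      coneCmp_cyclic_sum_eq_zero_iff_of_mem_left hP h]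
    tauto

theorem circOfCone_inv_one (hP : IsPositiveConeOn K P) {a : G} (ha : a ∈ K) :
    circOfCone P a⁻¹ 1 a = coneCmp P 1 a := by
  rw [circOfCone_eq_coneCmp hP (by simpa using ha) (by simpa using ha)]
  rcases hP.trichotomy ha with h | rfl | h
  · have h₁ : coneLt P a⁻¹ 1 := by simpa [coneLt]
    have h₂ : coneLt P 1 a := by simpa [coneLt]
    rw [coneCmp_eq_one h₁, coneCmp_eq_one h₂, coneCmp_eq_neg_one hP (hP.coneLt_trans h₁ h₂)]
    norm_num
  · simp [coneCmp, hP.coneLt_irrefl]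
  · have h₁ : coneLt P 1 a⁻¹ := by simpa [coneLt]
    have h₂ : coneLt P a 1 := by simpa [coneLt]
    rw [coneCmp_eq_neg_one hP h₁, coneCmp_eq_neg_one hP h₂,
      coneCmp_eq_one (hP.coneLt_trans h₂ h₁)]
    norm_num

theorem IsCircOrd.apply_eq_zero {c : G → G → G → ℤ} (hc : IsCircOrd c) {x y z : G}
    (h : x = y ∨ x = z ∨ y = z) : c x y z = 0 :=
  (hc.1 x y z).2 h

section LexExt

variable {H : Type*} [Group H] {q : G →* H} {c : H → H → H → ℤ}

theorem coneCmp_eq_zero_of_map_ne (hP : IsPositiveConeOn q.ker P) {x y : G} (h : q x ≠ q y) :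
    coneCmp P x y = 0 :=
  coneCmp_eq_zero_of_inv_mul_notMem hP fun h' => h (q.eq_iff.2 h').symm

theorem lexExt_eq_add_coneCmp (hP : IsPositiveConeOn q.ker P)
    (hc : ∀ x y z, x = y ∨ x = z ∨ y = z → c x y z = 0) (g₁ g₂ g₃ : G) :
    lexExt q P c g₁ g₂ g₃ =
      c (q g₁) (q g₂) (q g₃) + (coneCmp P g₁ g₂ + coneCmp P g₂ g₃ + coneCmp P g₃ g₁) := by
  have hmem : ∀ {x y : G}, q x = q y → x⁻¹ * y ∈ q.ker := fun h => q.eq_iff.1 h.symm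
  have hcmp : ∀ {x y : G}, q x ≠ q y → coneCmp P x y = 0 := coneCmp_eq_zero_of_map_ne hP
  have hpair : ∀ {x y : G}, q x = q y →
      circOfCone P (y⁻¹ * x) 1 (x⁻¹ * y) = coneCmp P x y := by
    intro x y h
    rw [show y⁻¹ * x = (x⁻¹ * y)⁻¹ by group, circOfCone_inv_one hP (hmem h),
      ← coneCmp_mul_left x 1 (x⁻¹ * y), mul_one, mul_inv_cancel_left]
  unfold lexExt
  split_ifs with hne heq h₁₂ h₂₃
  · rw [hcmp hne.1, hcmp hne.2.2, hcmp (Ne.symm hne.2.1)]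
    ring
  · rw [hc _ _ _ (Or.inl heq.1), ← circOfCone_mul_left P g₁, mul_one, mul_inv_cancel_left,
      mul_inv_cancel_left, circOfCone_eq_coneCmp hP (hmem heq.1) (hmem heq.2)]
    ring
  · have h₂₃ : q g₂ ≠ q g₃ := fun h => heq ⟨h₁₂, h⟩
    rw [hc _ _ _ (Or.inl h₁₂), hcmp h₂₃, hcmp fun h => h₂₃ (h₁₂.symm.trans h.symm), hpair h₁₂]
    ring
  · rw [hc _ _ _ (Or.inr (Or.inr h₂₃)), hcmp h₁₂, hcmp fun h => h₁₂ (h₂₃.trans h).symm,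
      hpair h₂₃]
    ring
  · have h₁₃ : q g₃ = q g₁ := by tauto
    rw [hc _ _ _ (Or.inr (Or.inl h₁₃.symm)), hcmp h₁₂, hcmp h₂₃, hpair h₁₃]
    ring

theorem lexExt_mem (hc : IsCircOrd c) (g₁ g₂ g₃ : G) :
    lexExt q P c g₁ g₂ g₃ = 0 ∨ lexExt q P c g₁ g₂ g₃ = 1 ∨ lexExt q P c g₁ g₂ g₃ = -1 := by
  unfold lexExt
  split_ifs <;> first | exact hc.2.1 _ _ _ | exact circOfCone_mem P _ _ _

theorem lexExt_eq_zero_iff (hP : IsPositiveConeOn q.ker P) (hc : IsCircOrd c) (g₁ g₂ g₃ : G) :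
    lexExt q P c g₁ g₂ g₃ = 0 ↔ g₁ = g₂ ∨ g₁ = g₃ ∨ g₂ = g₃ := by
  rw [lexExt_eq_add_coneCmp hP fun _ _ _ => hc.apply_eq_zero]
  by_cases himg : q g₁ = q g₂ ∨ q g₁ = q g₃ ∨ q g₂ = q g₃
  · rw [hc.apply_eq_zero himg, zero_add]
    refine coneCmp_cyclic_sum_eq_zero_iff hP ?_
    rcases himg with h | h | h
    exacts [Or.inl (q.eq_iff.1 h.symm), Or.inr (Or.inr (q.eq_iff.1 h)),
      Or.inr (Or.inl (q.eq_iff.1 h.symm))]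
  · simp only [not_or] at himg
    rw [coneCmp_eq_zero_of_map_ne hP himg.1, coneCmp_eq_zero_of_map_ne hP himg.2.2,
      coneCmp_eq_zero_of_map_ne hP (Ne.symm himg.2.1), add_zero, add_zero, add_zero, hc.1]
    refine iff_of_false (by tauto) ?_
    rintro (rfl | rfl | rfl) <;> tauto

theorem lexExt_cocycle (hP : IsPositiveConeOn q.ker P) (hc : IsCircOrd c) (g₁ g₂ g₃ g₄ : G) :
    lexExt q P c g₂ g₃ g₄ - lexExt q P c g₁ g₃ g₄ + lexExt q P c g₁ g₂ g₄
      - lexExt q P c g₁ g₂ g₃ = 0 := by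
  simp only [lexExt_eq_add_coneCmp hP fun _ _ _ => hc.apply_eq_zero]
  rw [coneCmp_swap hP g₂ g₄, coneCmp_swap hP g₁ g₃]
  linear_combination hc.2.2.1 (q g₁) (q g₂) (q g₃) (q g₄)

theorem lexExt_mul_left (hP : IsPositiveConeOn q.ker P) (hc : IsCircOrd c) (g g₁ g₂ g₃ : G) :
    lexExt q P c (g * g₁) (g * g₂) (g * g₃) = lexExt q P c g₁ g₂ g₃ := by
  simp only [lexExt_eq_add_coneCmp hP fun _ _ _ => hc.apply_eq_zero, map_mul, hc.2.2.2,
    coneCmp_mul_left]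

theorem isCircOrd_lexExt (hP : IsPositiveConeOn q.ker P) (hc : IsCircOrd c) :
    IsCircOrd (lexExt q P c) :=
  ⟨lexExt_eq_zero_iff hP hc, lexExt_mem hc, lexExt_cocycle hP hc, lexExt_mul_left hP hc⟩

theorem continuous_lexExt (hP : IsPositiveConeOn q.ker P) :
    Continuous fun c : CircOrd H => lexExt q P c.1 := by
  refine continuous_pi fun g₁ => continuous_pi fun g₂ => continuous_pi fun g₃ => ?_
  have h : (fun c : CircOrd H => lexExt q P c.1 g₁ g₂ g₃) = fun c =>
      c.1 (q g₁) (q g₂) (q g₃) + (coneCmp P g₁ g₂ + coneCmp P g₂ g₃ + coneCmp P g₃ g₁) :=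
    funext fun c => lexExt_eq_add_coneCmp hP (fun _ _ _ => c.2.apply_eq_zero) g₁ g₂ g₃
  rw [h]
  refine Continuous.add ?_ continuous_const
  exact (continuous_apply (q g₃)).comp <| (continuous_apply (q g₂)).comp <|
    (continuous_apply (q g₁)).comp continuous_subtype_val

end LexExt

theorem stmt11_general {H : Type*} [Group H] (q : G →* H)
    (P : Set G) (hP : IsPositiveConeOn q.ker P) :
    (∀ c : CircOrd H, IsCircOrd (lexExt q P c.1)) ∧
    ∃ Φ : CircOrd H → CircOrd G, Continuous Φ ∧ ∀ c : CircOrd H, (Φ c).1 = lexExt q P c.1 :=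
  ⟨fun c => isCircOrd_lexExt hP c.2,
    fun c => ⟨lexExt q P c.1, isCircOrd_lexExt hP c.2⟩,
    (continuous_lexExt hP).subtype_mk _, fun _ => rfl⟩

/-- Lemma 5.1: given a short exact sequence `1 → K → G → H → 1` (here `q : G → H` is
surjective with kernel `K`) and a left-ordering `<` of `K`, the lexicographic extension
`φ_<(c)` is a circular ordering of `G` for every `c ∈ CO(H)`, and the resulting map
`φ_< : CO(H) → CO(G)` is continuous. -/
theorem stmt11 {H : Type*} [Group H] (q : G →* H) (hq : Function.Surjective q)
    (P : Set G) (hP : IsPositiveConeOn q.ker P) :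
    (∀ c : CircOrd H, IsCircOrd (lexExt q P c.1)) ∧
    ∃ Φ : CircOrd H → CircOrd G, Continuous Φ ∧ ∀ c : CircOrd H, (Φ c).1 = lexExt q P c.1 :=
  stmt11_general q P hP

end Paper
end

section
/- Let (H,<) be a left-ordered group and let z ∈ H be a central element with id < z that is cofinal. For each n ≥ 1, every h ∈ H has a unique coset representative [h]_n ∈ h⟨zⁿ⟩ with id ≤ [h]_n < zⁿ, and the quotient H/⟨zⁿ⟩ carries the circular ordering cₙ given, for pairwise distinct cosets, by cₙ(g₁⟨zⁿ⟩, g₂⟨zⁿ⟩, g₃⟨zⁿ⟩) = sign(σ) where σ is the unique permutation of {1,2,3} with [g_{σ(1)}]_n < [g_{σ(2)}]_n < [g_{σ(3)}]_n. Let dₙ ∈ CO(H) be the lexicographic circular ordering of H built from the short exact sequence 1 → ⟨zⁿ⟩ → H → H/⟨zⁿ⟩ → 1, using cₙ on the quotient and the left-ordering of ⟨zⁿ⟩ in which zⁿ > id on the kernel (i.e. dₙ = φ_<(cₙ) with the lexicographic extension formula). Then the sequence (dₙ)_{n≥1} converges in CO(H) to the secret left-ordering c_<. -/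
/-!
Fix a triple in `H`. Once `n` is large, cofinality of `z` puts distinct elements of the triple
in distinct cosets of `⟨zⁿ⟩`, and gives `[g]ₙ = g` for `g ≥ 1` and `[g]ₙ = g zⁿ` for `g < 1`.
Since `g zⁿ` eventually exceeds any fixed element and right multiplication by the central
element `zⁿ` preserves `<`, passing to representatives lifts the elements below `1` above the
others without changing their relative order: the sorted triple is only cyclically rotated, so
`dₙ` and `c_<` agree on it. On triples with a repetition both orderings vanish.
-/

namespace Paper

variable {G : Type*} [Group G]

/-- The positive cone of the left-ordering of the kernel `⟨zⁿ⟩` in which `zⁿ > 1`. -/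
def kerCone (z : G) (n : ℕ) : Set G := {x : G | ∃ k : ℤ, 0 < k ∧ x = (z ^ n) ^ k}

/-- `a` and `b` lie in the same left coset of `⟨zⁿ⟩`. -/
def sameCoset (z : G) (n : ℕ) (a b : G) : Prop := ∃ k : ℤ, a⁻¹ * b = (z ^ n) ^ k

open Classical in
/-- The lexicographic circular ordering `dₙ` of `H` built from the short exact sequence
`1 → ⟨zⁿ⟩ → H → H/⟨zⁿ⟩ → 1`: on triples in pairwise distinct cosets it is the circular
ordering `cₙ` of the quotient (computed, via the minimal coset representatives `rep`, as
the sign of the permutation sorting the representatives); on the remaining triples it is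
given by the lexicographic extension formula using the ordering of `⟨zⁿ⟩` with `zⁿ > 1`,
with the two-coincidence cases determined by cyclic invariance. -/
noncomputable def dSeq (P : Set G) (z : G) (n : ℕ) (rep : G → G) : G → G → G → ℤ :=
  fun g₁ g₂ g₃ =>
    if ¬ sameCoset z n g₁ g₂ ∧ ¬ sameCoset z n g₁ g₃ ∧ ¬ sameCoset z n g₂ g₃ then
      circOfCone P (rep g₁) (rep g₂) (rep g₃)
    else if sameCoset z n g₁ g₂ ∧ sameCoset z n g₂ g₃ then
      circOfCone (kerCone z n) 1 (g₁⁻¹ * g₂) (g₁⁻¹ * g₃)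
    else if sameCoset z n g₁ g₂ then
      circOfCone (kerCone z n) (g₂⁻¹ * g₁) 1 (g₁⁻¹ * g₂)
    else if sameCoset z n g₂ g₃ then
      circOfCone (kerCone z n) (g₃⁻¹ * g₂) 1 (g₂⁻¹ * g₃)
    else
      circOfCone (kerCone z n) (g₁⁻¹ * g₃) 1 (g₃⁻¹ * g₁)

section PositiveCone

variable {P : Set G}

theorem coneLt_mul_left_iff_s15 (c a b : G) : coneLt P (c * a) (c * b) ↔ coneLt P a b := by
  simp only [coneLt, mul_inv_rev, mul_assoc, inv_mul_cancel_left]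

theorem coneLt_one_left_iff (g : G) : coneLt P 1 g ↔ g ∈ P := by
  simp only [coneLt, inv_one, one_mul]

namespace IsPositiveCone

theorem mem_or_inv_mem_iff (hP : IsPositiveCone P) (g : G) : g ∈ P ∨ g⁻¹ ∈ P ↔ g ≠ 1 :=
  Set.ext_iff.1 hP.2 g

theorem one_notMem (hP : IsPositiveCone P) : (1 : G) ∉ P := fun h =>
  (hP.mem_or_inv_mem_iff 1).1 (Or.inl h) rfl

theorem isStrictTotalOrder (hP : IsPositiveCone P) : IsStrictTotalOrder G (coneLt P) where
  trichotomous a b hab hba := by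
    by_contra hne
    have := (hP.mem_or_inv_mem_iff (a⁻¹ * b)).2 (mt inv_mul_eq_one.1 hne)
    rw [mul_inv_rev, inv_inv] at this
    exact this.elim hab hba
  irrefl a h := hP.one_notMem (by rwa [coneLt, inv_mul_cancel] at h)
  trans a b c hab hbc := by
    simpa only [coneLt, mul_assoc, mul_inv_cancel_left] using hP.1 _ hab _ hbc

theorem exists_leftOrder (hP : IsPositiveCone P) :
    ∃ _ : LinearOrder G, MulLeftMono G ∧ P = Set.Ioi 1 := by
  have := hP.isStrictTotalOrder
  classical
  refine ⟨linearOrderOfSTO (coneLt P), ⟨fun c a b hab => ?_⟩, Set.ext fun g => ?_⟩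
  · exact hab.imp (congrArg (c * ·)) (coneLt_mul_left_iff_s15 c a b).2
  · exact (coneLt_one_left_iff g).symm

end IsPositiveCone

end PositiveCone

theorem sameCoset_symm {z : G} {n : ℕ} {a b : G} (h : sameCoset z n a b) :
    sameCoset z n b a :=
  let ⟨k, hk⟩ := h
  ⟨-k, by rw [zpow_neg, ← hk, mul_inv_rev, inv_inv]⟩

section CyclicOrder

variable {α : Type*}

def IsCycOrdered [LT α] (a b c : α) : Prop :=
  (a < b ∧ b < c) ∨ (b < c ∧ c < a) ∨ (c < a ∧ a < b)

theorem IsCycOrdered.rotate [LT α] {a b c : α} (h : IsCycOrdered a b c) :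
    IsCycOrdered b c a := by
  unfold IsCycOrdered at *
  tauto

theorem IsCycOrdered.not_reverse [Preorder α] {a b c : α} (h : IsCycOrdered a b c) :
    ¬ IsCycOrdered c b a := by
  unfold IsCycOrdered at *
  rintro (⟨h₁, h₂⟩ | ⟨h₁, h₂⟩ | ⟨h₁, h₂⟩) <;> rcases h with ⟨h₃, h₄⟩ | ⟨h₃, h₄⟩ | ⟨h₃, h₄⟩ <;>
    order

theorem isCycOrdered_or_isCycOrdered_reverse [LinearOrder α] {a b c : α} (hab : a ≠ b)
    (hac : a ≠ c) (hbc : b ≠ c) : IsCycOrdered a b c ∨ IsCycOrdered c b a := by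
  unfold IsCycOrdered
  rcases hab.lt_or_gt with h₁ | h₁ <;> rcases hac.lt_or_gt with h₂ | h₂ <;>
    rcases hbc.lt_or_gt with h₃ | h₃ <;> tauto

end CyclicOrder

section LeftOrdered

variable [LinearOrder G] [MulLeftMono G]

theorem coneLt_Ioi_one_iff {a b : G} : coneLt (Set.Ioi 1) a b ↔ a < b :=
  lt_inv_mul_iff_lt

theorem circOfCone_Ioi_one_of_isCycOrdered {a b c : G} (h : IsCycOrdered a b c) :
    circOfCone (Set.Ioi 1) a b c = 1 := by
  rw [circOfCone, if_pos]
  simpa only [coneLt_Ioi_one_iff, IsCycOrdered] using h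

theorem circOfCone_Ioi_one_of_isCycOrdered_reverse {a b c : G} (h : IsCycOrdered c b a) :
    circOfCone (Set.Ioi 1) a b c = -1 := by
  rw [circOfCone, if_neg, if_pos]
  · simpa only [coneLt_Ioi_one_iff, IsCycOrdered] using h
  · simpa only [coneLt_Ioi_one_iff, IsCycOrdered] using h.not_reverse

theorem circOfCone_eq_zero {Q : Set G} (hQ : Q ⊆ Set.Ioi 1) {a b c : G}
    (h : a = b ∨ a = c ∨ b = c) : circOfCone Q a b c = 0 := by
  have hlt : ∀ x y, coneLt Q x y → x < y := fun x y hxy => coneLt_Ioi_one_iff.1 (hQ hxy)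
  rw [circOfCone, if_neg, if_neg] <;>
    rcases h with rfl | rfl | rfl <;>
    rintro (⟨h₁, h₂⟩ | ⟨h₁, h₂⟩ | ⟨h₁, h₂⟩) <;>
    have := hlt _ _ h₁ <;> have := hlt _ _ h₂ <;> order

theorem mul_le_mul_iff_right_of_mem_center {c a b : G} (hc : c ∈ Subgroup.center G) :
    a * c ≤ b * c ↔ a ≤ b := by
  rw [Subgroup.mem_center_iff.1 hc a, Subgroup.mem_center_iff.1 hc b]
  exact mul_le_mul_iff_left c

theorem mul_lt_mul_iff_right_of_mem_center {c a b : G} (hc : c ∈ Subgroup.center G) :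
    a * c < b * c ↔ a < b := by
  rw [Subgroup.mem_center_iff.1 hc a, Subgroup.mem_center_iff.1 hc b]
  exact mul_lt_mul_iff_left c

theorem zpow_strictMono_of_one_lt {w : G} (hw : 1 < w) : StrictMono (w ^ · : ℤ → G) :=
  strictMono_int_of_lt_succ fun k => by
    simpa only [zpow_add_one] using lt_mul_of_one_lt_right' (w ^ k) hw

def IsCofinalElt (z : G) : Prop :=
  ∀ h : G, ∃ m k : ℤ, z ^ m < h ∧ h < z ^ k

theorem IsCofinalElt.pow {z : G} (hz : 1 < z) (hcof : IsCofinalElt z) {n : ℕ} (hn : 1 ≤ n) :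
    IsCofinalElt (z ^ n) := by
  intro h
  obtain ⟨m, k, hm, hk⟩ := hcof h
  have hn' : (1 : ℤ) ≤ n := by exact_mod_cast hn
  refine ⟨-|m|, |k|, lt_of_le_of_lt ?_ hm, hk.trans_le ?_⟩ <;>
    rw [← zpow_natCast, ← zpow_mul] <;>
    refine (zpow_strictMono_of_one_lt hz).monotone ?_ <;>
    nlinarith [le_abs_self k, neg_abs_le m, mul_le_mul_of_nonneg_right hn' (abs_nonneg m),
      mul_le_mul_of_nonneg_right hn' (abs_nonneg k)]

def IsCosetRep (w h r : G) : Prop :=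
  (∃ k : ℤ, r = h * w ^ k) ∧ 1 ≤ r ∧ r < w

theorem isCosetRep_iff {w h r : G} : IsCosetRep w h r ↔
    (∃ k : ℤ, r = h * w ^ k) ∧ (r = 1 ∨ r ∈ Set.Ioi 1) ∧ coneLt (Set.Ioi 1) r w := by
  rw [IsCosetRep, coneLt_Ioi_one_iff, Set.mem_Ioi, le_iff_eq_or_lt, eq_comm]

section CosetRep

variable {w : G}

theorem le_mul_zpow_of_mem_center (hw : w ∈ Subgroup.center G) (hw₁ : 1 < w) {s : G}
    (hs : 1 ≤ s) {j : ℤ} (hj : 0 < j) : w ≤ s * w ^ j :=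
  calc w = w ^ (1 : ℤ) := (zpow_one w).symm
    _ ≤ 1 * w ^ j := by rw [one_mul]; exact (zpow_strictMono_of_one_lt hw₁).monotone hj
    _ ≤ s * w ^ j := (mul_le_mul_iff_right_of_mem_center (Subgroup.zpow_mem _ hw j)).2 hs

theorem IsCosetRep.eq (hw : w ∈ Subgroup.center G) {h r r' : G} (hr : IsCosetRep w h r)
    (hr' : IsCosetRep w h r') : r = r' := by
  obtain ⟨⟨k, rfl⟩, hr₁, hrw⟩ := hr
  obtain ⟨⟨k', rfl⟩, hr₁', hrw'⟩ := hr'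
  have hw₁ : 1 < w := hr₁.trans_lt hrw
  have shift : ∀ i j : ℤ, h * w ^ j = h * w ^ i * w ^ (j - i) := fun i j => by
    rw [mul_assoc, ← zpow_add, add_sub_cancel]
  rcases lt_trichotomy k k' with hkk | rfl | hkk
  · have := le_mul_zpow_of_mem_center hw hw₁ hr₁ (sub_pos.2 hkk)
    rw [← shift] at this
    exact absurd hrw' this.not_gt
  · rfl
  · have := le_mul_zpow_of_mem_center hw hw₁ hr₁' (sub_pos.2 hkk)
    rw [← shift] at this
    exact absurd hrw this.not_gt

theorem exists_isCosetRep (hw : w ∈ Subgroup.center G) (hw₁ : 1 < w) (hcof : IsCofinalElt w)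
    (h : G) : ∃ r, IsCosetRep w h r := by
  obtain ⟨m, k, hm, hk⟩ := hcof h
  have hmono := zpow_strictMono_of_one_lt hw₁
  have hbdd : ∀ j : ℤ, w ^ j ≤ h → j ≤ k := fun j hj => (hmono.lt_iff_lt.1 (hj.trans_lt hk)).le
  obtain ⟨j, hj, hmax⟩ := Int.exists_greatest_of_bdd ⟨k, hbdd⟩ ⟨m, hm.le⟩
  have hlt : h < w ^ (j + 1) := lt_of_not_ge fun hle => by linarith [hmax _ hle]
  have hcen := Subgroup.zpow_mem _ hw (-j)
  refine ⟨h * w ^ (-j), ⟨-j, rfl⟩, ?_, ?_⟩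
  · calc 1 = w ^ j * w ^ (-j) := by rw [← zpow_add, add_neg_cancel, zpow_zero]
      _ ≤ h * w ^ (-j) := (mul_le_mul_iff_right_of_mem_center hcen).2 hj
  · calc h * w ^ (-j) < w ^ (j + 1) * w ^ (-j) := (mul_lt_mul_iff_right_of_mem_center hcen).2 hlt
      _ = w := by rw [← zpow_add, add_neg_cancel_comm, zpow_one]

theorem existsUnique_isCosetRep (hw : w ∈ Subgroup.center G) (hw₁ : 1 < w)
    (hcof : IsCofinalElt w) (h : G) : ∃! r, IsCosetRep w h r :=
  let ⟨r, hr⟩ := exists_isCosetRep hw hw₁ hcof h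
  ⟨r, hr, fun _ hr' => (hr.eq hw hr').symm⟩

end CosetRep

theorem kerCone_subset_Ioi_one {z : G} (hz : 1 < z) {n : ℕ} (hn : 1 ≤ n) :
    kerCone z n ⊆ Set.Ioi 1 := by
  rintro _ ⟨k, hk, rfl⟩
  have hzn : 1 < z ^ n := one_lt_pow' hz (by omega)
  simpa using zpow_strictMono_of_one_lt hzn hk

theorem dSeq_eq_zero (P : Set G) {z : G} (hz : 1 < z) {n : ℕ} (hn : 1 ≤ n) (rep : G → G)
    {g₁ g₂ g₃ : G} (h : g₁ = g₂ ∨ g₁ = g₃ ∨ g₂ = g₃) : dSeq P z n rep g₁ g₂ g₃ = 0 := by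
  have hrefl : ∀ a, sameCoset z n a a := fun a => ⟨0, by simp⟩
  -- each branch either contradicts reflexivity or symmetry of `sameCoset`, or evaluates the
  -- kernel ordering at a triple with a repetition
  rcases h with rfl | rfl | rfl <;> unfold dSeq <;> split_ifs with h₁ h₂ h₃ h₄ <;>
    first
    | exact absurd (hrefl _) (by tauto)
    | exact absurd (sameCoset_symm h₃) (by tauto)
    | exact absurd (sameCoset_symm h₄) (by tauto)
    | exact circOfCone_eq_zero (kerCone_subset_Ioi_one hz hn) (by simp)

section Eventually

open Filter

variable {z : G} (hz : 1 < z) (hcof : IsCofinalElt z) (hzc : z ∈ Subgroup.center G)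
  {rep : ℕ → G → G} (hrep : ∀ n : ℕ, 1 ≤ n → ∀ h : G, IsCosetRep (z ^ n) h (rep n h))
include hz hcof

theorem eventually_not_sameCoset {x y : G} (hxy : x ≠ y) :
    ∀ᶠ n in atTop, ¬ sameCoset z n x y := by
  obtain ⟨m, k, hm, hk⟩ := hcof (x⁻¹ * y)
  filter_upwards [eventually_gt_atTop (m.natAbs + k.natAbs)] with n hn
  rintro ⟨j, hj⟩
  rw [hj, ← zpow_natCast, ← zpow_mul] at hm hk
  have hj₀ : j ≠ 0 := by
    rintro rfl
    rw [zpow_zero, inv_mul_eq_one] at hj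
    exact hxy hj
  have hmono := zpow_strictMono_of_one_lt hz
  have h₁ := hmono.lt_iff_lt.1 hm
  have h₂ := hmono.lt_iff_lt.1 hk
  rcases hj₀.lt_or_gt with hneg | hpos
  · have : (n : ℤ) * j ≤ -n := by nlinarith
    omega
  · have : (n : ℤ) ≤ n * j := by nlinarith
    omega

include hzc

theorem eventually_lt_mul_pow (y h : G) : ∀ᶠ n : ℕ in atTop, y < h * z ^ n := by
  obtain ⟨m, -, hm, -⟩ := hcof h
  obtain ⟨-, k, -, hk⟩ := hcof y
  filter_upwards [eventually_ge_atTop (k - m).toNat] with n hn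
  calc y < z ^ k := hk
    _ ≤ z ^ m * z ^ (n : ℤ) := by
      rw [← zpow_add]; exact (zpow_strictMono_of_one_lt hz).monotone (by omega)
    _ < h * z ^ n := by
      rw [zpow_natCast]
      exact (mul_lt_mul_iff_right_of_mem_center (Subgroup.pow_mem _ hzc n)).2 hm

include hrep

theorem eventually_rep_eq_self {h : G} (h₁ : 1 ≤ h) : ∀ᶠ n in atTop, rep n h = h := by
  obtain ⟨-, k, -, hk⟩ := hcof h
  filter_upwards [eventually_ge_atTop 1, eventually_ge_atTop k.toNat] with n hn hkn
  refine (hrep n hn h).eq (Subgroup.pow_mem _ hzc n) ⟨⟨0, by simp⟩, h₁, hk.trans_le ?_⟩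
  rw [← zpow_natCast]
  exact (zpow_strictMono_of_one_lt hz).monotone (by omega)

theorem eventually_rep_eq_mul_pow {h : G} (h₁ : h < 1) :
    ∀ᶠ n in atTop, rep n h = h * z ^ n := by
  filter_upwards [eventually_ge_atTop 1, eventually_lt_mul_pow hz hcof hzc 1 h] with n hn hpos
  refine (hrep n hn h).eq (Subgroup.pow_mem _ hzc n) ⟨⟨1, by simp⟩, hpos.le, ?_⟩
  simpa using (mul_lt_mul_iff_right_of_mem_center (Subgroup.pow_mem _ hzc n)).2 h₁

theorem eventually_isCycOrdered_rep_of_lt {a b c : G} (hab : a < b) (hbc : b < c) :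
    ∀ᶠ n in atTop, IsCycOrdered (rep n a) (rep n b) (rep n c) := by
  have hmul : ∀ n : ℕ, ∀ {x y : G}, x < y → x * z ^ n < y * z ^ n := fun n _ _ =>
    (mul_lt_mul_iff_right_of_mem_center (Subgroup.pow_mem _ hzc n)).2
  rcases lt_or_ge c 1 with hc | hc
  · filter_upwards [eventually_rep_eq_mul_pow hz hcof hzc hrep (hab.trans (hbc.trans hc)),
      eventually_rep_eq_mul_pow hz hcof hzc hrep (hbc.trans hc),
      eventually_rep_eq_mul_pow hz hcof hzc hrep hc] with n ha' hb' hc'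
    rw [ha', hb', hc']
    exact Or.inl ⟨hmul n hab, hmul n hbc⟩
  rcases lt_or_ge b 1 with hb | hb
  · filter_upwards [eventually_rep_eq_mul_pow hz hcof hzc hrep (hab.trans hb),
      eventually_rep_eq_mul_pow hz hcof hzc hrep hb, eventually_rep_eq_self hz hcof hzc hrep hc,
      eventually_lt_mul_pow hz hcof hzc c a] with n ha' hb' hc' hca
    rw [ha', hb', hc']
    exact Or.inr (Or.inr ⟨hca, hmul n hab⟩)
  rcases lt_or_ge a 1 with ha | ha
  · filter_upwards [eventually_rep_eq_mul_pow hz hcof hzc hrep ha,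
      eventually_rep_eq_self hz hcof hzc hrep hb, eventually_rep_eq_self hz hcof hzc hrep hc,
      eventually_lt_mul_pow hz hcof hzc c a] with n ha' hb' hc' hca
    rw [ha', hb', hc']
    exact Or.inr (Or.inl ⟨hbc, hca⟩)
  · filter_upwards [eventually_rep_eq_self hz hcof hzc hrep ha,
      eventually_rep_eq_self hz hcof hzc hrep hb, eventually_rep_eq_self hz hcof hzc hrep hc]
      with n ha' hb' hc'
    rw [ha', hb', hc']
    exact Or.inl ⟨hab, hbc⟩

theorem eventually_isCycOrdered_rep {a b c : G} (h : IsCycOrdered a b c) :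
    ∀ᶠ n in atTop, IsCycOrdered (rep n a) (rep n b) (rep n c) := by
  rcases h with ⟨h₁, h₂⟩ | ⟨h₁, h₂⟩ | ⟨h₁, h₂⟩
  · exact eventually_isCycOrdered_rep_of_lt hz hcof hzc hrep h₁ h₂
  · filter_upwards [eventually_isCycOrdered_rep_of_lt hz hcof hzc hrep h₁ h₂] with n hn
    exact hn.rotate.rotate
  · filter_upwards [eventually_isCycOrdered_rep_of_lt hz hcof hzc hrep h₁ h₂] with n hn
    exact hn.rotate

theorem eventually_circOfCone_rep {a b c : G} (hab : a ≠ b) (hac : a ≠ c) (hbc : b ≠ c) :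
    ∀ᶠ n in atTop, circOfCone (Set.Ioi 1) (rep n a) (rep n b) (rep n c) =
      circOfCone (Set.Ioi 1) a b c := by
  rcases isCycOrdered_or_isCycOrdered_reverse hab hac hbc with h | h
  · filter_upwards [eventually_isCycOrdered_rep hz hcof hzc hrep h] with n hn
    rw [circOfCone_Ioi_one_of_isCycOrdered hn, circOfCone_Ioi_one_of_isCycOrdered h]
  · filter_upwards [eventually_isCycOrdered_rep hz hcof hzc hrep h] with n hn
    rw [circOfCone_Ioi_one_of_isCycOrdered_reverse hn,
      circOfCone_Ioi_one_of_isCycOrdered_reverse h]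

theorem eventually_dSeq_eq (g₁ g₂ g₃ : G) :
    ∀ᶠ n in atTop, dSeq (Set.Ioi 1) z n (rep n) g₁ g₂ g₃ = circOfCone (Set.Ioi 1) g₁ g₂ g₃ := by
  by_cases hdeg : g₁ = g₂ ∨ g₁ = g₃ ∨ g₂ = g₃
  · filter_upwards [eventually_ge_atTop 1] with n hn
    rw [dSeq_eq_zero _ hz hn _ hdeg, circOfCone_eq_zero subset_rfl hdeg]
  rw [not_or, not_or] at hdeg
  obtain ⟨h₁₂, h₁₃, h₂₃⟩ := hdeg
  filter_upwards [eventually_not_sameCoset hz hcof h₁₂, eventually_not_sameCoset hz hcof h₁₃,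
    eventually_not_sameCoset hz hcof h₂₃, eventually_circOfCone_rep hz hcof hzc hrep h₁₂ h₁₃ h₂₃]
    with n hs₁₂ hs₁₃ hs₂₃ hn
  rw [dSeq, if_pos ⟨hs₁₂, hs₁₃, hs₂₃⟩, hn]

end Eventually

end LeftOrdered

theorem tendsto_circOrd_of_eventually_eq {ι : Type*} {l : Filter ι} {d : ι → CircOrd G}
    {c : CircOrd G} (h : ∀ g₁ g₂ g₃, ∀ᶠ i in l, (d i).1 g₁ g₂ g₃ = c.1 g₁ g₂ g₃) :
    Filter.Tendsto d l (nhds c) := by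
  simp only [tendsto_subtype_rng, tendsto_pi_nhds]
  exact fun g₁ g₂ g₃ => tendsto_nhds_of_eventually_eq (h g₁ g₂ g₃)

/-- Part of Theorem 6.2: let `(H,<)` be a left-ordered group (ordering given by the cone
`P`) with a positive cofinal central element `z`.  Then for each `n ≥ 1` every `h ∈ H` has
a unique coset representative `[h]ₙ ∈ h⟨zⁿ⟩` with `id ≤ [h]ₙ < zⁿ`, and the sequence of
lexicographic circular orderings `dₙ` built from `1 → ⟨zⁿ⟩ → H → H/⟨zⁿ⟩ → 1` converges
in `CO(H)` to the secret left-ordering `c_<`. -/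
theorem stmt15 (P : Set G) (hP : IsPositiveCone P) (z : G)
    (hzcentral : ∀ h : G, z * h = h * z) (hzpos : z ∈ P)
    (hzcofinal : ∀ h : G, ∃ m k : ℤ, coneLt P (z ^ m) h ∧ coneLt P h (z ^ k)) :
    (∀ n : ℕ, 1 ≤ n → ∀ h : G, ∃! r : G,
      (∃ k : ℤ, r = h * (z ^ n) ^ k) ∧ (r = 1 ∨ r ∈ P) ∧ coneLt P r (z ^ n)) ∧
    (∀ rep : ℕ → G → G,
      (∀ n : ℕ, 1 ≤ n → ∀ h : G,
        (∃ k : ℤ, rep n h = h * (z ^ n) ^ k) ∧ (rep n h = 1 ∨ rep n h ∈ P) ∧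
          coneLt P (rep n h) (z ^ n)) →
      ∀ d : ℕ → CircOrd G, (∀ n : ℕ, 1 ≤ n → (d n).1 = dSeq P z n (rep n)) →
      ∀ csec : CircOrd G, csec.1 = circOfCone P →
      Filter.Tendsto d Filter.atTop (nhds csec)) := by
  obtain ⟨_, _, rfl⟩ := hP.exists_leftOrder
  have hzc : z ∈ Subgroup.center G := Subgroup.mem_center_iff.2 fun g => (hzcentral g).symm
  have hcof : IsCofinalElt z := fun h => by simpa only [coneLt_Ioi_one_iff] using hzcofinal h
  simp only [← isCosetRep_iff]
  refine ⟨fun n hn h => existsUnique_isCosetRep (Subgroup.pow_mem _ hzc n)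
    (one_lt_pow' hzpos (by omega)) (hcof.pow hzpos hn) h, fun rep hrep d hd csec hcsec => ?_⟩
  refine tendsto_circOrd_of_eventually_eq fun g₁ g₂ g₃ => ?_
  filter_upwards [Filter.eventually_ge_atTop 1, eventually_dSeq_eq hzpos hcof hzc hrep g₁ g₂ g₃]
    with n hn hdn
  rw [hd n hn, hcsec, hdn]

end Paper
end
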